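/- arXiv:1608.02699 — 2 statements merged into one kernel-verified Lean document; each statement's English description precedes it below -/
import Mathlib

section
/- Let f₁,…,f_n : ℝ^d → ℝ^d be C¹ bounded maps with bounded Jacobians and Θ = (id+f₁)∘⋯∘(id+f_n). Then ‖∂Θ − I‖_∞ ≤ max{1, exp(Σ_{l=1}^n ‖∂f_l‖_∞)} · Σ_{k=1}^n ‖∂f_k‖_∞. -/
/-!
In any normed ring `ab - 1 = (a - 1)(b - 1) + (a - 1) + (b - 1)`, so `1 + ‖a - 1‖` is
submultiplicative. By the chain rule, and since `∂(id + f_k) - I = ∂f_k`, this gives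
`‖∂Θ - I‖ ≤ ∏ₖ (1 + ‖∂f_k‖_∞) - 1 ≤ exp S - 1 ≤ S · exp S` with `S = ∑ₖ ‖∂f_k‖_∞`.
-/

theorem Real.exp_sub_one_le_mul_exp (x : ℝ) : Real.exp x - 1 ≤ x * Real.exp x := by
  have h := mul_le_mul_of_nonneg_right (Real.one_sub_le_exp_neg x) (Real.exp_pos x).le
  rw [← Real.exp_add, neg_add_cancel, Real.exp_zero] at h
  linarith

theorem norm_mul_sub_one_le {R : Type*} [SeminormedRing R] (a b : R) :
    ‖a * b - 1‖ ≤ (1 + ‖a - 1‖) * (1 + ‖b - 1‖) - 1 := by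
  have hsplit : a * b - 1 = (a - 1) * (b - 1) + (a - 1) + (b - 1) := by noncomm_ring
  calc ‖a * b - 1‖ ≤ ‖a - 1‖ * ‖b - 1‖ + ‖a - 1‖ + ‖b - 1‖ := by
        rw [hsplit]
        grw [norm_add₃_le, norm_mul_le]
    _ = (1 + ‖a - 1‖) * (1 + ‖b - 1‖) - 1 := by ring

section

variable {𝕜 E : Type*} [NontriviallyNormedField 𝕜] [NormedAddCommGroup E] [NormedSpace 𝕜 E]

theorem differentiable_foldr_comp {l : List (E → E)} (hl : ∀ g ∈ l, Differentiable 𝕜 g) :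
    Differentiable 𝕜 (l.foldr (· ∘ ·) id) := by
  induction l with
  | nil => exact differentiable_id
  | cons g l ih =>
    simp only [List.mem_cons, forall_eq_or_imp] at hl
    exact hl.1.comp (ih hl.2)

theorem norm_fderiv_foldr_comp_sub_one_le {n : ℕ} (g : Fin n → E → E) (a : Fin n → ℝ)
    (hg : ∀ k, Differentiable 𝕜 (g k)) (ha : ∀ k x, ‖fderiv 𝕜 (g k) x - 1‖ ≤ a k) (x : E) :
    ‖fderiv 𝕜 ((List.ofFn g).foldr (· ∘ ·) id) x - 1‖ ≤ ∏ k, (1 + a k) - 1 := by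
  induction n with
  | zero => simp [ContinuousLinearMap.one_def]
  | succ n ih =>
    set G := (List.ofFn fun k => g k.succ).foldr (· ∘ ·) id
    have hG : Differentiable 𝕜 G := differentiable_foldr_comp <| by
      simpa only [List.forall_mem_ofFn_iff] using fun k : Fin n => hg k.succ
    have hG_le := ih (fun k => g k.succ) (fun k => a k.succ) (fun k => hg k.succ)
      (fun k => ha k.succ)
    have ha₀ : 0 ≤ 1 + a 0 := by linarith [(norm_nonneg _).trans (ha 0 x)]
    rw [List.ofFn_succ, List.foldr_cons, Fin.prod_univ_succ,
      fderiv_comp x (hg 0 (G x)) (hG x), ← ContinuousLinearMap.mul_def]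
    calc _ ≤ (1 + ‖fderiv 𝕜 (g 0) (G x) - 1‖) * (1 + ‖fderiv 𝕜 G x - 1‖) - 1 :=
          norm_mul_sub_one_le _ _
      _ ≤ (1 + a 0) * ∏ k : Fin n, (1 + a k.succ) - 1 := by
          gcongr
          · exact ha 0 (G x)
          · linarith

theorem fderiv_id_add_sub_one {f : E → E} {x : E} (hf : DifferentiableAt 𝕜 f x) :
    fderiv 𝕜 (fun y => y + f y) x - 1 = fderiv 𝕜 f x := by
  rw [fderiv_fun_add differentiableAt_fun_id hf, fderiv_fun_id, ← ContinuousLinearMap.one_def,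
    add_sub_cancel_left]

end

theorem stmt4_general {d n : ℕ}
    (f : Fin n → EuclideanSpace ℝ (Fin d) → EuclideanSpace ℝ (Fin d))
    (hf : ∀ k, ContDiff ℝ 1 (f k))
    (hbddD : ∀ k, BddAbove (Set.range fun x => ‖fderiv ℝ (f k) x‖))
    (Θ : EuclideanSpace ℝ (Fin d) → EuclideanSpace ℝ (Fin d))
    (hΘ : Θ = (List.ofFn (fun k => fun x => x + f k x)).foldr (· ∘ ·) id) :
    ∀ x, ‖fderiv ℝ Θ x - ContinuousLinearMap.id ℝ (EuclideanSpace ℝ (Fin d))‖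
      ≤ max 1 (Real.exp (∑ l : Fin n, ⨆ y, ‖fderiv ℝ (f l) y‖))
          * ∑ k : Fin n, ⨆ y, ‖fderiv ℝ (f k) y‖ := by
  intro x
  set M : Fin n → ℝ := fun k => ⨆ y, ‖fderiv ℝ (f k) y‖
  have hfd (k : Fin n) : Differentiable ℝ (f k) := (hf k).differentiable one_ne_zero
  have hM (k : Fin n) (y) : ‖fderiv ℝ (f k) y‖ ≤ M k := le_ciSup (hbddD k) y
  have hM₀ (k : Fin n) : 0 ≤ M k := (norm_nonneg _).trans (hM k x)
  have hS : 0 ≤ ∑ k, M k := Finset.sum_nonneg fun k _ => hM₀ k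
  subst hΘ
  calc _ ≤ ∏ k, (1 + M k) - 1 :=
        norm_fderiv_foldr_comp_sub_one_le (fun k x => x + f k x) M
          (fun k => differentiable_id.add (hfd k))
          (fun k y => by rw [fderiv_id_add_sub_one (hfd k y)]; exact hM k y) x
    _ ≤ Real.exp (∑ k, M k) - 1 := by grw [Real.prod_one_add_le_exp_sum _ hM₀]
    _ ≤ (∑ k, M k) * Real.exp (∑ k, M k) := Real.exp_sub_one_le_mul_exp _
    _ ≤ max 1 (Real.exp (∑ k, M k)) * ∑ k, M k := by
        rw [mul_comm]; gcongr; exact le_max_right _ _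

/-- For `Θ = (id+f₁) ∘ ⋯ ∘ (id+f_n)` with each `f_k` a `C¹` bounded map with bounded
Jacobian and `id + f_k` bijective:
`‖∂Θ - I‖_∞ ≤ max{1, exp(∑ₗ ‖∂f_l‖_∞)} · ∑ₖ ‖∂f_k‖_∞`. -/
theorem stmt4 {d n : ℕ}
    (f : Fin n → EuclideanSpace ℝ (Fin d) → EuclideanSpace ℝ (Fin d))
    (hf : ∀ k, ContDiff ℝ 1 (f k))
    (hbdd : ∀ k, BddAbove (Set.range fun x => ‖f k x‖))
    (hbddD : ∀ k, BddAbove (Set.range fun x => ‖fderiv ℝ (f k) x‖))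
    (hbij : ∀ k, Function.Bijective (fun x => x + f k x))
    (Θ : EuclideanSpace ℝ (Fin d) → EuclideanSpace ℝ (Fin d))
    (hΘ : Θ = (List.ofFn (fun k => fun x => x + f k x)).foldr (· ∘ ·) id) :
    ∀ x, ‖fderiv ℝ Θ x - ContinuousLinearMap.id ℝ (EuclideanSpace ℝ (Fin d))‖
      ≤ max 1 (Real.exp (∑ l : Fin n, ⨆ y, ‖fderiv ℝ (f l) y‖))
          * ∑ k : Fin n, ⨆ y, ‖fderiv ℝ (f k) y‖ :=
  stmt4_general f hf hbddD Θ hΘ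
end

section
/- Let Ω ⊂ ℝ^d be open and bounded with C¹ boundary and outward unit normal ν, and suppose h : ℝ^d → ℝ^d is continuous and satisfies ∫_{∂Ω'} (h·ν') 𝔣 ds = 0 for every translated unit ball Ω' = B(x+û) (x ∈ ℝ^d, û a unit vector, ν' its outward normal) and every smooth 𝔣 : ℝ^d → ℝ. Then h = 0 on ℝ^d. -/
open MeasureTheory Metric Set Pointwise

/-- The measure `volume.toSphere` on the unit sphere of a Euclidean space of positive
dimension gives positive mass to nonempty open sets. -/
lemma toSphere_pos_of_isOpen {d : ℕ} (hd : 0 < d)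
    {V : Set (Metric.sphere (0 : EuclideanSpace ℝ (Fin d)) 1)}
    (hV : IsOpen V) (hne : V.Nonempty) :
    0 < (volume : Measure (EuclideanSpace ℝ (Fin d))).toSphere V := by
  obtain ⟨w0, hw0⟩ := hne
  obtain ⟨r, hr, hball⟩ := Metric.isOpen_iff.1 hV w0 hw0
  rw [Measure.toSphere_apply' _ hV.measurableSet]
  have hdim : (Module.finrank ℝ (EuclideanSpace ℝ (Fin d)) : ENNReal) ≠ 0 := by
    simp [finrank_euclideanSpace, hd.ne']
  refine ENNReal.mul_pos hdim ?_
  set O : Set (EuclideanSpace ℝ (Fin d)) :=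
    {y | y ≠ 0} ∩ (fun y : EuclideanSpace ℝ (Fin d) => (‖y‖, ‖y‖⁻¹ • y)) ⁻¹'
      (Set.Iio 1 ×ˢ Metric.ball (w0 : EuclideanSpace ℝ (Fin d)) r) with hO
  have hOopen : IsOpen O := by
    have hcont : ContinuousOn (fun y : EuclideanSpace ℝ (Fin d) => (‖y‖, ‖y‖⁻¹ • y))
        {y | y ≠ 0} := by
      refine ContinuousOn.prodMk continuous_norm.continuousOn ?_
      exact (continuous_norm.continuousOn.inv₀ fun y hy => norm_ne_zero_iff.2 hy).smul
        continuousOn_id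
    exact hcont.isOpen_inter_preimage isOpen_ne ((isOpen_Iio).prod Metric.isOpen_ball)
  have hOsub : O ⊆ Set.Ioo (0 : ℝ) 1 • (Subtype.val '' V) := by
    rintro y ⟨hy0, hy⟩
    simp only [Set.mem_setOf_eq] at hy0
    obtain ⟨hy1, hy2⟩ := hy
    have hny : (0:ℝ) < ‖y‖ := norm_pos_iff.2 hy0
    have hw : ‖(‖y‖⁻¹ • y : EuclideanSpace ℝ (Fin d))‖ = 1 := by
      rw [norm_smul, norm_inv, norm_norm, inv_mul_cancel₀ hny.ne']
    refine ⟨‖y‖, ⟨hny, hy1⟩, ‖y‖⁻¹ • y, ?_, ?_⟩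
    · refine ⟨⟨‖y‖⁻¹ • y, mem_sphere_zero_iff_norm.2 hw⟩, hball ?_, rfl⟩
      simpa [Metric.mem_ball, Subtype.dist_eq] using hy2
    · simp [smul_smul, mul_inv_cancel₀ hny.ne']
  have hne' : O.Nonempty := by
    refine ⟨(1/2 : ℝ) • (w0 : EuclideanSpace ℝ (Fin d)), ?_, ?_⟩
    · have hn : ‖(w0 : EuclideanSpace ℝ (Fin d))‖ = 1 := mem_sphere_zero_iff_norm.1 w0.2
      simp only [Set.mem_setOf_eq, ne_eq, smul_eq_zero, not_or]
      refine ⟨by norm_num, fun h0 => by rw [h0] at hn; simp at hn⟩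
    · have hn : ‖(w0 : EuclideanSpace ℝ (Fin d))‖ = 1 := mem_sphere_zero_iff_norm.1 w0.2
      have h1 : ‖(1/2 : ℝ) • (w0 : EuclideanSpace ℝ (Fin d))‖ = 1/2 := by
        rw [norm_smul, hn]; norm_num
      have heq : (‖(1/2 : ℝ) • (w0 : EuclideanSpace ℝ (Fin d))‖)⁻¹ •
          ((1/2 : ℝ) • (w0 : EuclideanSpace ℝ (Fin d))) = (w0 : EuclideanSpace ℝ (Fin d)) := by
        rw [h1, smul_smul]; norm_num
      refine ⟨?_, ?_⟩
      · show ‖(1/2 : ℝ) • (w0 : EuclideanSpace ℝ (Fin d))‖ ∈ Set.Iio (1:ℝ)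
        rw [Set.mem_Iio, h1]; norm_num
      · show (‖(1/2 : ℝ) • (w0 : EuclideanSpace ℝ (Fin d))‖)⁻¹ •
            ((1/2 : ℝ) • (w0 : EuclideanSpace ℝ (Fin d)))
            ∈ Metric.ball (w0 : EuclideanSpace ℝ (Fin d)) r
        rw [Metric.mem_ball, heq, dist_self]
        exact hr
  exact ((hOopen.measure_pos volume hne').trans_le (measure_mono hOsub)).ne'

set_option maxHeartbeats 2000000 in
/-- If a continuous vector field `h` satisfies `∫_{∂B(c)} (h·ν) 𝔣 ds = 0` over the
boundary of every translated unit ball (with outward normal `ν`) and every smooth `𝔣`,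
then `h = 0`.  The boundary integral over `∂B(c)` is parametrized by the unit sphere:
points are `c + w` with outward normal `w`. -/
theorem stmt17 {d : ℕ}
    (h : EuclideanSpace ℝ (Fin d) → EuclideanSpace ℝ (Fin d))
    (hc : Continuous h)
    (hint : ∀ (c : EuclideanSpace ℝ (Fin d)) (𝔣 : EuclideanSpace ℝ (Fin d) → ℝ),
      ContDiff ℝ (⊤ : ℕ∞) 𝔣 →
      ∫ w : Metric.sphere (0 : EuclideanSpace ℝ (Fin d)) 1,
          (inner ℝ (h (c + (w : EuclideanSpace ℝ (Fin d))))
              ((w : EuclideanSpace ℝ (Fin d))) : ℝ)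
            * 𝔣 (c + (w : EuclideanSpace ℝ (Fin d)))
          ∂((volume : Measure (EuclideanSpace ℝ (Fin d))).toSphere) = 0) :
    ∀ x, h x = 0 := by
  rcases Nat.eq_zero_or_pos d with hd | hd
  · subst hd; intro x; exact PiLp.ext fun i => i.elim0
  intro x
  by_contra hx
  set μ := (volume : Measure (EuclideanSpace ℝ (Fin d))).toSphere with hμ
  have hnorm : (0:ℝ) < ‖h x‖ := norm_pos_iff.2 hx
  set u : EuclideanSpace ℝ (Fin d) := ‖h x‖⁻¹ • h x with hu
  have hun : ‖u‖ = 1 := by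
    rw [hu, norm_smul, norm_inv, norm_norm, inv_mul_cancel₀ hnorm.ne']
  set w0 : Metric.sphere (0 : EuclideanSpace ℝ (Fin d)) 1 :=
    ⟨u, mem_sphere_zero_iff_norm.2 hun⟩ with hw0
  set c : EuclideanSpace ℝ (Fin d) := x - u with hcdef
  have hcx : c + u = x := by rw [hcdef]; abel
  set G : Metric.sphere (0 : EuclideanSpace ℝ (Fin d)) 1 → ℝ :=
    fun w => (inner ℝ (h (c + (w : EuclideanSpace ℝ (Fin d))))
      ((w : EuclideanSpace ℝ (Fin d))) : ℝ) with hG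
  have hGcont : Continuous G := by
    apply Continuous.inner
    · exact hc.comp (continuous_const.add continuous_subtype_val)
    · exact continuous_subtype_val
  set a : ℝ := G w0 with ha
  have hapos : 0 < a := by
    have : G w0 = ‖h x‖ := by
      simp only [hG, hw0, hcx]
      rw [hu, real_inner_smul_right, real_inner_self_eq_norm_sq]
      field_simp
    rw [ha, this]; exact hnorm
  -- find r > 0 so that G > a/2 on the ball of radius r around w0
  obtain ⟨r, hrpos, hGr⟩ : ∃ r > 0, ∀ w, dist w w0 < r → a/2 < G w := by
    obtain ⟨δ, hδ, hδ'⟩ := Metric.continuous_iff.1 hGcont w0 (a/2) (by linarith)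
    refine ⟨δ, hδ, fun w hw => ?_⟩
    have := hδ' w hw
    rw [Real.dist_eq, abs_lt] at this
    have := this.1
    simp only [← ha] at this
    linarith
  -- bound on |G|
  obtain ⟨M, hM⟩ : ∃ M, ∀ w, |G w| ≤ M := by
    obtain ⟨M, hM⟩ := (isCompact_range (hGcont.abs)).bddAbove
    exact ⟨M, fun w => hM ⟨w, rfl⟩⟩
  have hM0 : 0 ≤ M := le_trans (abs_nonneg _) (hM w0)
  -- sets
  set A : Set (Metric.sphere (0 : EuclideanSpace ℝ (Fin d)) 1) :=
    {w | dist w w0 < r} with hA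
  set V : Set (Metric.sphere (0 : EuclideanSpace ℝ (Fin d)) 1) :=
    {w | dist w w0 < r/4} with hV
  have hAopen : IsOpen A := Metric.isOpen_ball
  have hVopen : IsOpen V := Metric.isOpen_ball
  have hVA : V ⊆ A := by
    intro w hw
    simp only [hV, Set.mem_setOf_eq] at hw
    simp only [hA, Set.mem_setOf_eq]
    linarith
  set m : ℝ := (μ V).toReal with hm
  have hmpos : 0 < m := by
    rw [hm]
    exact ENNReal.toReal_pos (toSphere_pos_of_isOpen hd hVopen
      ⟨w0, by simp [hV, hrpos]⟩).ne' (measure_lt_top _ _).ne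
  set S : ℝ := (μ Aᶜ).toReal with hS
  have hS0 : 0 ≤ S := ENNReal.toReal_nonneg
  -- key inequality for each t ≥ 0
  have key : ∀ t : ℝ, 0 ≤ t →
      a/2 * m ≤ M * S * Real.exp (t * (r/4)^2 - t * r^2) := by
    intro t ht
    set 𝔣 : EuclideanSpace ℝ (Fin d) → ℝ :=
      fun y => Real.exp (-(t * ‖y - (c + u)‖^2)) with h𝔣
    have h𝔣smooth : ContDiff ℝ (⊤ : ℕ∞) 𝔣 := by
      apply Real.contDiff_exp.comp
      exact (contDiff_const.mul ((contDiff_id.sub contDiff_const).norm_sq ℝ)).neg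
    have h𝔣val : ∀ w : Metric.sphere (0 : EuclideanSpace ℝ (Fin d)) 1,
        𝔣 (c + (w : EuclideanSpace ℝ (Fin d))) = Real.exp (-(t * dist w w0 ^ 2)) := by
      intro w
      have hd' : dist w w0 = ‖(w : EuclideanSpace ℝ (Fin d)) - u‖ := by
        rw [Subtype.dist_eq, dist_eq_norm]
      simp only [h𝔣]
      rw [show c + (w : EuclideanSpace ℝ (Fin d)) - (c + u)
          = (w : EuclideanSpace ℝ (Fin d)) - u from by abel, hd']
    set g : Metric.sphere (0 : EuclideanSpace ℝ (Fin d)) 1 → ℝ :=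
      fun w => G w * 𝔣 (c + (w : EuclideanSpace ℝ (Fin d))) with hg
    have hzero : ∫ w, g w ∂μ = 0 := hint c 𝔣 h𝔣smooth
    have hgcont : Continuous g :=
      hGcont.mul (h𝔣smooth.continuous.comp (continuous_const.add continuous_subtype_val))
    have hgint : Integrable g μ :=
      hgcont.integrable_of_hasCompactSupport (HasCompactSupport.of_compactSpace g)
    -- g ≥ 0 on A
    have hgnnA : ∀ w ∈ A, 0 ≤ g w := by
      intro w hw
      have h1 : 0 < G w := lt_trans (by linarith) (hGr w hw)
      have h2 : 0 < 𝔣 (c + (w : EuclideanSpace ℝ (Fin d))) := by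
        rw [h𝔣val w]; exact Real.exp_pos _
      exact (mul_pos h1 h2).le
    -- lower bound on the integral over V
    have hlbV : a/2 * Real.exp (-(t * (r/4)^2)) * m ≤ ∫ w in V, g w ∂μ := by
      have hble : ∀ w ∈ V, a/2 * Real.exp (-(t * (r/4)^2)) ≤ g w := by
        intro w hw
        have hd4 : dist w w0 < r/4 := hw
        have hG2 : a/2 ≤ G w := (hGr w (hVA hw)).le
        have hexp : Real.exp (-(t * (r/4)^2)) ≤ 𝔣 (c + (w : EuclideanSpace ℝ (Fin d))) := by
          rw [h𝔣val w]
          apply Real.exp_le_exp.2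
          have hsq : dist w w0 ^ 2 ≤ (r/4)^2 := pow_le_pow_left₀ dist_nonneg hd4.le 2
          nlinarith [mul_le_mul_of_nonneg_left hsq ht]
        calc a/2 * Real.exp (-(t*(r/4)^2))
            ≤ G w * 𝔣 (c + (w : EuclideanSpace ℝ (Fin d))) :=
              mul_le_mul hG2 hexp (Real.exp_pos _).le (by linarith)
          _ = g w := rfl
      exact setIntegral_ge_of_const_le_real hVopen.measurableSet (measure_lt_top μ V).ne hble
        hgint.integrableOn
    -- the integral over V is at most the integral over A
    have hVA' : (∫ w in V, g w ∂μ) ≤ ∫ w in A, g w ∂μ :=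
      setIntegral_mono_set hgint.integrableOn
        ((ae_restrict_iff' hAopen.measurableSet).2 (ae_of_all _ hgnnA))
        (HasSubset.Subset.eventuallyLE hVA)
    -- upper bound on the integral over Aᶜ
    have hub : ‖∫ w in Aᶜ, g w ∂μ‖ ≤ M * Real.exp (-(t * r^2)) * S := by
      apply norm_setIntegral_le_of_norm_le_const (measure_lt_top _ _)
      intro w hw
      have hge : r ≤ dist w w0 := not_lt.1 hw
      have hexp : 𝔣 (c + (w : EuclideanSpace ℝ (Fin d))) ≤ Real.exp (-(t * r^2)) := by
        rw [h𝔣val w]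
        apply Real.exp_le_exp.2
        have h2 : r^2 ≤ dist w w0 ^2 := pow_le_pow_left₀ hrpos.le hge 2
        nlinarith [mul_le_mul_of_nonneg_left h2 ht]
      have habs : |𝔣 (c + (w : EuclideanSpace ℝ (Fin d)))|
          = 𝔣 (c + (w : EuclideanSpace ℝ (Fin d))) :=
        abs_of_pos (by rw [h𝔣val w]; exact Real.exp_pos _)
      rw [Real.norm_eq_abs, hg, abs_mul, habs]
      exact mul_le_mul (hM w) hexp (by rw [h𝔣val w]; exact (Real.exp_pos _).le) hM0
    have hClb : -(M * Real.exp (-(t*r^2)) * S) ≤ ∫ w in Aᶜ, g w ∂μ :=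
      (abs_le.1 (by rwa [Real.norm_eq_abs] at hub)).1
    have hsplit : (∫ w in A, g w ∂μ) + ∫ w in Aᶜ, g w ∂μ = 0 := by
      rw [integral_add_compl hAopen.measurableSet hgint, hzero]
    have hmain : a/2 * Real.exp (-(t*(r/4)^2)) * m ≤ M * Real.exp (-(t*r^2)) * S := by
      linarith
    have hexp_eq : Real.exp (-(t*r^2))
        = Real.exp (t*(r/4)^2 - t*r^2) * Real.exp (-(t*(r/4)^2)) := by
      rw [← Real.exp_add]; ring_nf
    rw [hexp_eq] at hmain
    have hE : 0 < Real.exp (-(t*(r/4)^2)) := Real.exp_pos _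
    have hfin : (a/2*m) * Real.exp (-(t*(r/4)^2))
        ≤ (M * S * Real.exp (t*(r/4)^2 - t*r^2)) * Real.exp (-(t*(r/4)^2)) := by
      calc (a/2*m) * Real.exp (-(t*(r/4)^2))
          = a/2 * Real.exp (-(t*(r/4)^2)) * m := by ring
        _ ≤ M * (Real.exp (t*(r/4)^2 - t*r^2) * Real.exp (-(t*(r/4)^2))) * S := hmain
        _ = (M * S * Real.exp (t*(r/4)^2 - t*r^2)) * Real.exp (-(t*(r/4)^2)) := by ring
    exact le_of_mul_le_mul_right hfin hE
  -- conclude: the right-hand side tends to 0, contradiction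
  have hcoef : (r/4)^2 - r^2 < 0 := by nlinarith [hrpos, sq_nonneg r]
  have h1 : Filter.Tendsto (fun t : ℝ => t*(r/4)^2 - t*r^2) Filter.atTop Filter.atBot := by
    have heq : (fun t : ℝ => t*(r/4)^2 - t*r^2) = fun t => t * ((r/4)^2 - r^2) := by
      funext t; ring
    rw [heq]
    exact Filter.Tendsto.atTop_mul_const_of_neg hcoef Filter.tendsto_id
  have h2 : Filter.Tendsto (fun t : ℝ => M * S * Real.exp (t*(r/4)^2 - t*r^2))
      Filter.atTop (nhds 0) := by
    have := (Real.tendsto_exp_atBot.comp h1).const_mul (M*S)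
    simpa using this
  have hq : (0:ℝ) < a/2 * m := mul_pos (by linarith) hmpos
  obtain ⟨t, hlt, ht0⟩ :=
    ((h2.eventually_lt_const hq).and (Filter.eventually_ge_atTop (0:ℝ))).exists
  exact absurd (key t ht0) (not_le.2 hlt)
end
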